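/- arXiv:1905.00054 — 4 statements merged into one kernel-verified Lean document; each statement's English description precedes it below -/
import Mathlib

section
/- Let K be a field of characteristic 2 and let x, s, t be independent transcendentals. In the rational function field K(x, s, t) one has the symmetry x + x²t⁻¹ + (x² + x⁴t⁻²)(s + s²t⁻¹)⁻¹ = x + x²s⁻¹ + (x² + x⁴s⁻²)(t + t²s⁻¹)⁻¹. -/
open MvPolynomial

set_option maxHeartbeats 1000000 in
/-- In the rational function field `K(x, s, t)` over a field `K` of characteristic 2
(realized as the fraction field of `K[x, s, t]`), one has the Adem symmetry
`x + x²t⁻¹ + (x² + x⁴t⁻²)(s + s²t⁻¹)⁻¹ = x + x²s⁻¹ + (x² + x⁴s⁻²)(t + t²s⁻¹)⁻¹`. -/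
theorem stmt_8 (K : Type*) [Field K] [CharP K 2] :
    let F := FractionRing (MvPolynomial (Fin 3) K)
    let x : F := algebraMap (MvPolynomial (Fin 3) K) F (X 0)
    let s : F := algebraMap (MvPolynomial (Fin 3) K) F (X 1)
    let t : F := algebraMap (MvPolynomial (Fin 3) K) F (X 2)
    x + x ^ 2 * t⁻¹ + (x ^ 2 + x ^ 4 * (t⁻¹) ^ 2) * (s + s ^ 2 * t⁻¹)⁻¹ =
      x + x ^ 2 * s⁻¹ + (x ^ 2 + x ^ 4 * (s⁻¹) ^ 2) * (t + t ^ 2 * s⁻¹)⁻¹ := by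
  intro F x s t
  have hinj := IsFractionRing.injective (MvPolynomial (Fin 3) K) F
  haveI : CharP F 2 := charP_of_injective_ringHom hinj 2
  have hs : s ≠ 0 := by
    simp only [s, ne_eq, map_eq_zero_iff _ hinj]; exact X_ne_zero 1
  have ht : t ≠ 0 := by
    simp only [t, ne_eq, map_eq_zero_iff _ hinj]; exact X_ne_zero 2
  have hst : s + t ≠ 0 := by
    intro h
    rw [CharTwo.add_eq_iff_eq_add, zero_add] at h
    exact absurd ((X_inj (R := K) 1 2).mp (hinj h)) (by decide)
  have hA : s + s ^ 2 * t⁻¹ ≠ 0 := by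
    have e : s + s ^ 2 * t⁻¹ = s * (s + t) * t⁻¹ := by rw [mul_add, add_mul, mul_assoc s t, mul_inv_cancel₀ ht]; ring
    rw [e]
    exact mul_ne_zero (mul_ne_zero hs hst) (inv_ne_zero ht)
  have hB : t + t ^ 2 * s⁻¹ ≠ 0 := by
    have e : t + t ^ 2 * s⁻¹ = t * (s + t) * s⁻¹ := by rw [mul_add, add_mul, mul_assoc t s, mul_inv_cancel₀ hs]; ring
    rw [e]
    exact mul_ne_zero (mul_ne_zero ht hst) (inv_ne_zero hs)
  have hC : s * t + s ^ 2 ≠ 0 := by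
    have e : s * t + s ^ 2 = s * (s + t) := by ring
    rw [e]; exact mul_ne_zero hs hst
  have hD : t * s + t ^ 2 ≠ 0 := by
    have e : t * s + t ^ 2 = t * (s + t) := by ring
    rw [e]; exact mul_ne_zero ht hst
  have hts : t + s ≠ 0 := by rwa [add_comm]
  field_simp
  ring
end

section
/- Let R be a commutative F₂-algebra and let ζ(t) = Σ_{i≥0} ζ_i t^(2^i) be a Laurent series over R with ζ₀ = 1, so that ζ(t) = t·u(t) with u(t) ∈ R⟦t⟧ a unit, and ζ(t) is invertible in R((t)). Let ζ̄(X) = Σ ζ̄_j X^(2^j) denote the composition inverse of ζ viewed as a power series. Then for every n ≥ 1, the coefficient of t^(2^n − 2) in ζ(t)⁻¹ ∈ R((t)) equals ζ̄_n; equivalently, res(t^(−2^n+1) · ζ(t)⁻¹ dt) = ζ̄_n. -/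
open PowerSeries

/-- `f.comp2 g` is the composition `f(g(X))` of formal power series; it agrees with
the usual composition whenever `g` has zero constant term. -/
noncomputable def PowerSeries.comp2 {K : Type*} [CommRing K] (f g : PowerSeries K) :
    PowerSeries K :=
  PowerSeries.mk fun n =>
    ∑ k ∈ Finset.range (n + 1), PowerSeries.coeff k f * PowerSeries.coeff n (g ^ k)

/-- The additive power series `Σ_{i ≥ 0} a_i X^(2^i)` with coefficient sequence `a`. -/
noncomputable def additiveSeries {R : Type*} [CommRing R] (a : ℕ → R) : PowerSeries R :=
  PowerSeries.mk fun n => if n = 2 ^ Nat.log 2 n then a (Nat.log 2 n) else 0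

namespace Stmt11Aux

variable {R : Type*} [CommRing R]

lemma coeff_additive (a : ℕ → R) (m : ℕ) :
    coeff m (additiveSeries a) = if m = 2 ^ Nat.log 2 m then a (Nat.log 2 m) else 0 :=
  coeff_mk _ _

lemma coeff_comp2 (f g : PowerSeries R) (n : ℕ) :
    coeff n (f.comp2 g) = ∑ k ∈ Finset.range (n + 1), coeff k f * coeff n (g ^ k) :=
  coeff_mk _ _

lemma coeff_sq_odd (h2 : (2 : R) = 0) (g : PowerSeries R) (m : ℕ) (hm : m % 2 = 1) :
    coeff m (g * g) = 0 := by
  rw [PowerSeries.coeff_mul]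
  apply Finset.sum_involution (fun x _ => (x.2, x.1))
  · intro x hx
    have h : coeff x.1 g * coeff x.2 g + coeff x.2 g * coeff x.1 g
        = 2 * (coeff x.1 g * coeff x.2 g) := by ring
    rw [h, h2, zero_mul]
  · intro x hx _ hcontra
    have h1 : x.2 = x.1 := congrArg Prod.fst hcontra
    rw [Finset.HasAntidiagonal.mem_antidiagonal] at hx
    omega
  · intro x hx
    rw [Finset.HasAntidiagonal.mem_antidiagonal] at hx ⊢
    omega
  · intro x hx
    exact rfl

lemma coeff_sq_even (h2 : (2 : R) = 0) (g : PowerSeries R) (a : ℕ) :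
    coeff (2 * a) (g * g) = coeff a g * coeff a g := by
  rw [PowerSeries.coeff_mul]
  have hmem : ((a, a) : ℕ × ℕ) ∈ Finset.HasAntidiagonal.antidiagonal (2 * a) := by
    rw [Finset.HasAntidiagonal.mem_antidiagonal]; omega
  rw [← Finset.add_sum_erase _ _ hmem]
  have hrest : ∑ x ∈ (Finset.HasAntidiagonal.antidiagonal (2 * a)).erase (a, a),
      coeff x.1 g * coeff x.2 g = 0 := by
    apply Finset.sum_involution (fun x _ => (x.2, x.1))
    · intro x hx
      have h : coeff x.1 g * coeff x.2 g + coeff x.2 g * coeff x.1 g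
          = 2 * (coeff x.1 g * coeff x.2 g) := by ring
      rw [h, h2, zero_mul]
    · intro x hx _ hcontra
      have h1 : x.2 = x.1 := congrArg Prod.fst hcontra
      have hm := Finset.mem_of_mem_erase hx
      rw [Finset.HasAntidiagonal.mem_antidiagonal] at hm
      have hne := Finset.ne_of_mem_erase hx
      apply hne
      have hx1 : x.1 = a := by omega
      have hx2 : x.2 = a := by omega
      calc x = (x.1, x.2) := rfl
      _ = (a, a) := by rw [hx1, hx2]
    · intro x hx
      have hm := Finset.mem_of_mem_erase hx
      rw [Finset.HasAntidiagonal.mem_antidiagonal] at hm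
      refine Finset.mem_erase.2 ⟨?_, ?_⟩
      · intro hcontra
        apply Finset.ne_of_mem_erase hx
        have hx2 : x.2 = a := congrArg Prod.fst hcontra
        have hx1 : x.1 = a := congrArg Prod.snd hcontra
        calc x = (x.1, x.2) := rfl
        _ = (a, a) := by rw [hx1, hx2]
      · rw [Finset.HasAntidiagonal.mem_antidiagonal]; omega
    · intro x hx
      exact rfl
  rw [hrest, add_zero]

/-- Coefficients of `P^k` below `k` vanish, where `P = additiveSeries z`. -/
lemma coeff_pow_additive_eq_zero (z : ℕ → R) {k m : ℕ} (hm : m < k) :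
    coeff m ((additiveSeries z) ^ k) = 0 := by
  have hX : (X : PowerSeries R) ∣ additiveSeries z := by
    rw [PowerSeries.X_dvd_iff]
    show constantCoeff (PowerSeries.mk _) = _
    rw [PowerSeries.constantCoeff_mk]
    norm_num
  exact PowerSeries.X_pow_dvd_iff.mp (pow_dvd_pow_of_dvd hX k) m hm

/-- The key combinatorial lemma: `coeff (2^n - 1) (P^(2^j - 1)) = δ_{jn}` for `j ≤ n`. -/
lemma lemD (h2 : (2 : R) = 0) (z : ℕ → R) (hz0 : z 0 = 1) :
    ∀ j n : ℕ, j ≤ n →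
      coeff (2 ^ n - 1) ((additiveSeries z) ^ (2 ^ j - 1)) = if j = n then 1 else 0 := by
  intro j
  induction j with
  | zero =>
    intro n _
    rw [show (2 : ℕ) ^ 0 - 1 = 0 from rfl, pow_zero, PowerSeries.coeff_one]
    have h1 : (1 : ℕ) ≤ 2 ^ n := Nat.one_le_two_pow
    have hiff : 2 ^ n - 1 = 0 ↔ n = 0 := by
      constructor
      · intro h
        by_contra hn
        have : 2 ^ 1 ≤ 2 ^ n := Nat.pow_le_pow_right (by norm_num) (by omega)
        omega
      · intro h; rw [h]; norm_num
    by_cases hn : n = 0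
    · rw [if_pos (by omega), if_pos hn.symm]
    · rw [if_neg (by omega), if_neg (by omega)]
  | succ j ih =>
    intro n hn
    have hn1 : 1 ≤ n := by omega
    have h2j : 1 ≤ 2 ^ j := Nat.one_le_two_pow
    have h2n' : 2 ^ n = 2 * 2 ^ (n - 1) := by
      rw [← pow_succ']
      congr 1
      omega
    have h2n1 : 1 ≤ 2 ^ (n - 1) := Nat.one_le_two_pow
    have hsplit : (additiveSeries z) ^ (2 ^ (j + 1) - 1)
        = ((additiveSeries z) ^ (2 ^ j - 1)) * ((additiveSeries z) ^ (2 ^ j - 1))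
          * (additiveSeries z) := by
      rw [← pow_add, ← pow_succ]
      congr 1
      have : 2 ^ (j + 1) = 2 * 2 ^ j := by rw [pow_succ]; ring
      omega
    set g := (additiveSeries z) ^ (2 ^ j - 1) with hgdef
    rw [hsplit, PowerSeries.coeff_mul]
    rw [Finset.sum_eq_single ((2 ^ n - 2, 1) : ℕ × ℕ)]
    · have hee : 2 ^ n - 2 = 2 * (2 ^ (n - 1) - 1) := by omega
      rw [hee, coeff_sq_even h2]
      have hP1 : coeff 1 (additiveSeries z) = 1 := by
        rw [coeff_additive]
        norm_num [hz0]
      rw [hP1, mul_one, ih (n - 1) (by omega)]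
      by_cases hj : j = n - 1
      · rw [if_pos hj, if_pos (by omega), mul_one]
      · rw [if_neg hj, if_neg (by omega), mul_zero]
    · intro x hx hne
      rw [Finset.HasAntidiagonal.mem_antidiagonal] at hx
      rcases Nat.even_or_odd x.1 with he | ho
      · have hodd : x.2 % 2 = 1 := by
          obtain ⟨c, hc⟩ := he
          omega
        have hx2 : x.2 ≠ 1 := by
          intro h1
          apply hne
          have hx1 : x.1 = 2 ^ n - 2 := by omega
          calc x = (x.1, x.2) := rfl
          _ = (2 ^ n - 2, 1) := by rw [hx1, h1]
        have hz : coeff x.2 (additiveSeries z) = 0 := by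
          rw [coeff_additive, if_neg]
          intro hcontra
          rcases Nat.eq_zero_or_pos (Nat.log 2 x.2) with h0 | hpos
          · rw [h0] at hcontra
            norm_num at hcontra
            exact hx2 hcontra
          · have hdvd : 2 ∣ 2 ^ Nat.log 2 x.2 := dvd_pow_self 2 (by omega)
            rw [← hcontra] at hdvd
            omega
        rw [hz, mul_zero]
      · have hz : coeff x.1 (g * g) = 0 :=
          coeff_sq_odd h2 _ _ (Nat.odd_iff.mp ho)
        rw [hz, zero_mul]
    · intro hmem
      exfalso
      apply hmem
      rw [Finset.HasAntidiagonal.mem_antidiagonal]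
      simp only []
      omega

/-- From `hgf` we deduce `P * (V.comp2 P) = X` where `V_k = Q_{k+1}`. -/
lemma lemA (z zb : ℕ → R)
    (hgf : (additiveSeries zb).comp2 (additiveSeries z) = PowerSeries.X) :
    additiveSeries z *
      ((PowerSeries.mk fun k => coeff (k + 1) (additiveSeries zb)).comp2 (additiveSeries z))
      = PowerSeries.X := by
  set P := additiveSeries z with hP
  set Q := additiveSeries zb with hQ
  set V : PowerSeries R := PowerSeries.mk fun k => coeff (k + 1) Q with hV
  ext m
  rw [← hgf, PowerSeries.coeff_mul, coeff_comp2]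
  have hstep1 : ∀ x ∈ Finset.HasAntidiagonal.antidiagonal m,
      coeff x.1 P * coeff x.2 (V.comp2 P)
        = ∑ k ∈ Finset.range (m + 1), coeff x.1 P * (coeff k V * coeff x.2 (P ^ k)) := by
    intro x hx
    rw [Finset.HasAntidiagonal.mem_antidiagonal] at hx
    rw [coeff_comp2, Finset.mul_sum]
    apply Finset.sum_subset
    · apply Finset.range_subset_range.2
      omega
    · intro k hk hk2
      rw [Finset.mem_range] at hk hk2
      have : x.2 < k := by omega
      rw [coeff_pow_additive_eq_zero z this, mul_zero, mul_zero]
  rw [Finset.sum_congr rfl hstep1, Finset.sum_comm]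
  have hstep2 : ∀ k ∈ Finset.range (m + 1),
      ∑ x ∈ Finset.HasAntidiagonal.antidiagonal m, coeff x.1 P * (coeff k V * coeff x.2 (P ^ k))
        = coeff k V * coeff m (P ^ (k + 1)) := by
    intro k hk
    have : P ^ (k + 1) = P * P ^ k := by rw [pow_succ]; ring
    rw [this, PowerSeries.coeff_mul, Finset.mul_sum]
    apply Finset.sum_congr rfl
    intro x hx
    ring
  rw [Finset.sum_congr rfl hstep2]
  -- RHS: coeff m (Q.comp2 P) = Σ_{k ∈ range (m+1)} Q_k (P^k)_m
  have hQ0 : coeff 0 Q = 0 := by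
    rw [hQ, coeff_additive]
    norm_num
  rw [Finset.sum_range_succ' (fun k => coeff k Q * coeff m (P ^ k)) m]
  rw [hQ0, zero_mul, add_zero]
  rw [Finset.sum_range_succ (fun k => coeff k V * coeff m (P ^ (k + 1))) m]
  rw [coeff_pow_additive_eq_zero z (by omega : m < m + 1), mul_zero, add_zero]
  apply Finset.sum_congr rfl
  intro k hk
  rw [hV, coeff_mk]

/-- The final coefficient computation: `coeff (2^n-1) (V.comp2 P) = zb n`. -/
lemma lemC (h2 : (2 : R) = 0) (z zb : ℕ → R) (hz0 : z 0 = 1) {n : ℕ} (hn : 1 ≤ n) :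
    coeff (2 ^ n - 1)
      ((PowerSeries.mk fun k => coeff (k + 1) (additiveSeries zb)).comp2 (additiveSeries z))
      = zb n := by
  have h1 : (1 : ℕ) ≤ 2 ^ n := Nat.one_le_two_pow
  rw [coeff_comp2]
  have hr : 2 ^ n - 1 + 1 = 2 ^ n := by omega
  rw [hr]
  rw [Finset.sum_eq_single (2 ^ n - 1)]
  · rw [coeff_mk, hr, coeff_additive, Nat.log_pow (by norm_num : 1 < 2),
      if_pos rfl, lemD h2 z hz0 n n le_rfl, if_pos rfl, mul_one]
  · intro k hk hne
    rw [Finset.mem_range] at hk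
    by_cases hpow : k + 1 = 2 ^ Nat.log 2 (k + 1)
    · have hlt : 2 ^ Nat.log 2 (k + 1) < 2 ^ n := by omega
      have hj : Nat.log 2 (k + 1) < n :=
        (Nat.pow_lt_pow_iff_right (by norm_num : 1 < 2)).mp hlt
      have hkeq : k = 2 ^ Nat.log 2 (k + 1) - 1 := by omega
      rw [hkeq, lemD h2 z hz0 _ n (le_of_lt hj), if_neg (by omega), mul_zero]
    · rw [coeff_mk, coeff_additive, if_neg hpow, zero_mul]
  · intro hmem
    exfalso
    exact hmem (Finset.mem_range.2 (by omega))

end Stmt11Aux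

/-- Over a commutative `𝔽₂`-algebra `R`, let `ζ(t) = Σ ζ_i t^(2^i)` with `ζ₀ = 1`,
invertible in `R((t))`, and let `ζ̄(X) = Σ ζ̄_j X^(2^j)` be its composition inverse as a
power series. Then for `n ≥ 1` the coefficient of `t^(2^n − 2)` in `ζ(t)⁻¹` is `ζ̄_n`;
i.e. `res(t^(−2^n+1) ζ(t)⁻¹ dt) = ζ̄_n`. -/
theorem stmt_11 (R : Type*) [CommRing R] [Algebra (ZMod 2) R] (z zb : ℕ → R)
    (hz0 : z 0 = 1) (hzb0 : zb 0 = 1)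
    (hfg : (additiveSeries z).comp2 (additiveSeries zb) = PowerSeries.X)
    (hgf : (additiveSeries zb).comp2 (additiveSeries z) = PowerSeries.X) :
    ∀ n : ℕ, 1 ≤ n → ∀ w : LaurentSeries R,
      (HahnSeries.ofPowerSeries ℤ R (additiveSeries z)) * w = 1 →
        w.coeff ((2 : ℤ) ^ n - 2) = zb n := by
  intro n hn w hw
  have h2 : (2 : R) = 0 := by
    have h := map_ofNat (algebraMap (ZMod 2) R) 2
    rw [show ((OfNat.ofNat 2 : ZMod 2)) = 0 by decide, map_zero] at h
    exact h.symm
  set P := additiveSeries z with hPdef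
  set S : PowerSeries R :=
    (PowerSeries.mk fun k => PowerSeries.coeff (k + 1) (additiveSeries zb)).comp2 P with hSdef
  have hPS : P * S = PowerSeries.X := Stmt11Aux.lemA z zb hgf
  set w' : LaurentSeries R :=
    HahnSeries.single (-1 : ℤ) (1 : R) * HahnSeries.ofPowerSeries ℤ R S with hw'def
  have hZw' : (HahnSeries.ofPowerSeries ℤ R P) * w' = 1 := by
    rw [hw'def, mul_left_comm, ← map_mul, hPS, HahnSeries.ofPowerSeries_X,
      HahnSeries.single_mul_single, mul_one]
    norm_num [HahnSeries.single_zero_one]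
  have hwu : w = w' := by
    calc w = w * ((HahnSeries.ofPowerSeries ℤ R P) * w') := by rw [hZw', mul_one]
    _ = ((HahnSeries.ofPowerSeries ℤ R P) * w) * w' := by ring
    _ = w' := by rw [hw, one_mul]
  have h1 : (1 : ℕ) ≤ 2 ^ n := Nat.one_le_two_pow
  have hcast : (2 : ℤ) ^ n - 2 = ((2 ^ n - 1 : ℕ) : ℤ) + (-1) := by
    push_cast [h1]
    ring
  rw [hwu, hw'def, hcast, HahnSeries.coeff_single_mul_add, one_mul,
    HahnSeries.ofPowerSeries_apply_coeff]
  exact Stmt11Aux.lemC h2 z zb hz0 hn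
end

section
/- Let R be a commutative F₂-algebra with elements ζ₀ = 1, ζ₁, ζ₂, … and, for each n ≥ 0, define c_n ∈ R((t)) by t^(2^n) · c_n(t) = Σ_{i≥n+1} ζ_i t^(2^i) + ζ(t)⁻¹ · Σ_{i≥n} ζ_i² t^(2^{i+1}), where ζ(t) = Σ_{i≥0} ζ_i t^(2^i) is invertible in R((t)) since ζ₀ = 1. Then the c_n satisfy the recursion c_n + c_{n−1} · t^(−2^{n−1}) = ζ_n + ζ(t)⁻¹ · ζ_{n−1}² for all n ≥ 1, with c₀ = 1. -/
open PowerSeries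

/-- The tail `Σ_{i ≥ n} ζ_i t^(2^i)` of the additive series with coefficients `z`. -/
noncomputable def tailSeries {R : Type*} [CommRing R] (z : ℕ → R) (n : ℕ) : PowerSeries R :=
  PowerSeries.mk fun m =>
    if m = 2 ^ Nat.log 2 m ∧ n ≤ Nat.log 2 m then z (Nat.log 2 m) else 0

/-- The tail `Σ_{i ≥ n} ζ_i² t^(2^(i+1))` of squares of the series with coefficients `z`. -/
noncomputable def tailSqSeries {R : Type*} [CommRing R] (z : ℕ → R) (n : ℕ) : PowerSeries R :=
  PowerSeries.mk fun m =>
    if m = 2 ^ Nat.log 2 m ∧ n + 1 ≤ Nat.log 2 m then z (Nat.log 2 m - 1) ^ 2 else 0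

section AuxStmt12
variable {R : Type*} [CommRing R]

lemma aux_ofPS_monomial (k : ℕ) (a : R) :
    HahnSeries.ofPowerSeries ℤ R ((PowerSeries.monomial k) a) = HahnSeries.single (k : ℤ) a := by
  have h : (PowerSeries.monomial k) a = PowerSeries.C a * PowerSeries.X ^ k := by
    ext m
    rw [PowerSeries.coeff_monomial, PowerSeries.coeff_C_mul_X_pow]
  rw [h, map_mul, HahnSeries.ofPowerSeries_C, HahnSeries.ofPowerSeries_X_pow]
  rw [show HahnSeries.C a = HahnSeries.single (0:ℤ) a from rfl, HahnSeries.single_mul_single]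
  simp

lemma aux_tail_succ (z : ℕ → R) (n : ℕ) :
    tailSeries z n = tailSeries z (n + 1) + (PowerSeries.monomial (2 ^ n)) (z n) := by
  ext m
  rw [map_add, PowerSeries.coeff_monomial]
  simp only [tailSeries, tailSqSeries, PowerSeries.coeff_mk]
  show (if m = 2 ^ Nat.log 2 m ∧ n ≤ Nat.log 2 m then z (Nat.log 2 m) else 0) =
    (if m = 2 ^ Nat.log 2 m ∧ n + 1 ≤ Nat.log 2 m then z (Nat.log 2 m) else 0) +
      (if m = 2 ^ n then z n else 0)
  by_cases hm : m = 2 ^ Nat.log 2 m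
  · by_cases hEq : Nat.log 2 m = n
    · rw [if_pos ⟨hm, hEq.ge⟩, if_neg (fun h => by omega), if_pos (by rw [← hEq]; exact hm),
        zero_add, hEq]
    · have h2n : m ≠ 2 ^ n := fun h => hEq (by rw [h, Nat.log_pow one_lt_two])
      rw [if_neg h2n, add_zero,
        if_congr (show (m = 2 ^ Nat.log 2 m ∧ n ≤ Nat.log 2 m) ↔
          (m = 2 ^ Nat.log 2 m ∧ n + 1 ≤ Nat.log 2 m) from
          ⟨fun h => ⟨h.1, by omega⟩, fun h => ⟨h.1, by omega⟩⟩) rfl rfl]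
  · have h2n : m ≠ 2 ^ n := fun h => hm (by rw [h, Nat.log_pow one_lt_two])
    rw [if_neg (fun h => hm h.1), if_neg (fun h => hm h.1), if_neg h2n, add_zero]

lemma aux_tailSq_succ (z : ℕ → R) (n : ℕ) :
    tailSqSeries z n = tailSqSeries z (n + 1) + (PowerSeries.monomial (2 ^ (n + 1))) (z n ^ 2) := by
  ext m
  rw [map_add, PowerSeries.coeff_monomial]
  simp only [tailSeries, tailSqSeries, PowerSeries.coeff_mk]
  show (if m = 2 ^ Nat.log 2 m ∧ n + 1 ≤ Nat.log 2 m then z (Nat.log 2 m - 1) ^ 2 else 0) =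
    (if m = 2 ^ Nat.log 2 m ∧ n + 1 + 1 ≤ Nat.log 2 m then z (Nat.log 2 m - 1) ^ 2 else 0) +
      (if m = 2 ^ (n + 1) then z n ^ 2 else 0)
  by_cases hm : m = 2 ^ Nat.log 2 m
  · by_cases hEq : Nat.log 2 m = n + 1
    · rw [if_pos ⟨hm, hEq.ge⟩, if_neg (fun h => by omega), if_pos (by rw [← hEq]; exact hm),
        zero_add, hEq]
      simp
    · have h2n : m ≠ 2 ^ (n + 1) := fun h => hEq (by rw [h, Nat.log_pow one_lt_two])
      rw [if_neg h2n, add_zero,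
        if_congr (show (m = 2 ^ Nat.log 2 m ∧ n + 1 ≤ Nat.log 2 m) ↔
          (m = 2 ^ Nat.log 2 m ∧ n + 1 + 1 ≤ Nat.log 2 m) from
          ⟨fun h => ⟨h.1, by omega⟩, fun h => ⟨h.1, by omega⟩⟩) rfl rfl]
  · have h2n : m ≠ 2 ^ (n + 1) := fun h => hm (by rw [h, Nat.log_pow one_lt_two])
    rw [if_neg (fun h => hm h.1), if_neg (fun h => hm h.1), if_neg h2n, add_zero]

lemma aux_additive_eq_tail (z : ℕ → R) : additiveSeries z = tailSeries z 0 := by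
  ext m
  show _ = _
  simp [additiveSeries, tailSeries]

lemma aux_diag (h2 : (2 : R) = 0) (g : PowerSeries R) (m : ℕ) :
    PowerSeries.coeff m (g * g) =
      if m % 2 = 0 then PowerSeries.coeff (m / 2) g * PowerSeries.coeff (m / 2) g else 0 := by
  classical
  rw [PowerSeries.coeff_mul,
    ← Finset.sum_filter_add_sum_filter_not (Finset.HasAntidiagonal.antidiagonal m) (fun p => p.1 = p.2)]
  have hoff : (∑ p ∈ (Finset.HasAntidiagonal.antidiagonal m).filter (fun p => ¬p.1 = p.2),
      PowerSeries.coeff p.1 g * PowerSeries.coeff p.2 g) = 0 := by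
    refine Finset.sum_involution (fun p _ => (p.2, p.1)) (fun p hp => ?_) (fun p hp _ => ?_)
      (fun p hp => ?_) (fun p hp => ?_)
    · show PowerSeries.coeff p.1 g * PowerSeries.coeff p.2 g +
        PowerSeries.coeff p.2 g * PowerSeries.coeff p.1 g = 0
      rw [mul_comm (PowerSeries.coeff p.2 g) (PowerSeries.coeff p.1 g), ← two_mul, h2,
        zero_mul]
    · simp only [Finset.mem_filter] at hp
      exact fun h => hp.2 ((Prod.ext_iff.mp h).1).symm
    · simp only [Finset.mem_filter, Finset.HasAntidiagonal.mem_antidiagonal] at hp ⊢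
      exact ⟨by omega, fun h => hp.2 h.symm⟩
    · simp
  rw [hoff, add_zero]
  by_cases he : m % 2 = 0
  · obtain ⟨k, rfl⟩ : ∃ k, m = k + k := ⟨m / 2, by omega⟩
    have hfil : (Finset.HasAntidiagonal.antidiagonal (k + k)).filter (fun p => p.1 = p.2) = {(k, k)} := by
      ext p
      simp only [Finset.mem_filter, Finset.HasAntidiagonal.mem_antidiagonal, Finset.mem_singleton, Prod.ext_iff]
      constructor
      · rintro ⟨h1, h2'⟩; constructor <;> omega
      · rintro ⟨h1, h2'⟩; constructor <;> omega
    rw [hfil, Finset.sum_singleton, if_pos he]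
    have hk : (k + k) / 2 = k := by omega
    rw [hk]
  · rw [if_neg he]
    have hfil : (Finset.HasAntidiagonal.antidiagonal m).filter (fun p => p.1 = p.2) = ∅ := by
      ext p
      simp only [Finset.mem_filter, Finset.HasAntidiagonal.mem_antidiagonal, Finset.notMem_empty, iff_false,
        not_and]
      intro h1 h2'; omega
    rw [hfil, Finset.sum_empty]

lemma aux_sq (h2 : (2 : R) = 0) (z : ℕ → R) :
    additiveSeries z ^ 2 = tailSqSeries z 0 := by
  ext m
  rw [pow_two, aux_diag h2]
  simp only [additiveSeries, tailSqSeries, PowerSeries.coeff_mk]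
  by_cases he : m % 2 = 0
  · rw [if_pos he]
    obtain ⟨k, rfl⟩ : ∃ k, m = k + k := ⟨m / 2, by omega⟩
    have hk2 : (k + k) / 2 = k := by omega
    rw [hk2]
    by_cases hk : k = 2 ^ Nat.log 2 k
    · have hm2 : k + k = 2 ^ (Nat.log 2 k + 1) := by rw [pow_succ]; omega
      have hL : Nat.log 2 (k + k) = Nat.log 2 k + 1 := by rw [hm2, Nat.log_pow one_lt_two]
      rw [if_pos hk, if_pos ⟨by rw [hL]; exact hm2, by omega⟩, hL, ← pow_two]
      simp
    · rw [if_neg hk, zero_mul, if_neg]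
      rintro ⟨h1, h2'⟩
      apply hk
      obtain ⟨L', hL'⟩ : ∃ L', Nat.log 2 (k + k) = L' + 1 := ⟨Nat.log 2 (k + k) - 1, by omega⟩
      rw [hL', pow_succ] at h1
      have hkL : k = 2 ^ L' := by omega
      rw [hkL, Nat.log_pow one_lt_two]
  · rw [if_neg he, if_neg]
    rintro ⟨h1, h2'⟩
    obtain ⟨L', hL'⟩ : ∃ L', Nat.log 2 m = L' + 1 := ⟨Nat.log 2 m - 1, by omega⟩
    rw [hL', pow_succ] at h1
    omega

end AuxStmt12

/-- Over a commutative `𝔽₂`-algebra `R` with `ζ₀ = 1` and `ζ(t) = Σ ζ_i t^(2^i)`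
invertible in `R((t))` with inverse `w`, define `c_n ∈ R((t))` by
`t^(2^n) c_n = Σ_{i≥n+1} ζ_i t^(2^i) + ζ(t)⁻¹ Σ_{i≥n} ζ_i² t^(2^(i+1))`. Then
`c_n + c_{n−1} t^(−2^(n−1)) = ζ_n + ζ(t)⁻¹ ζ_{n−1}²` for all `n ≥ 1`, and `c₀ = 1`. -/
theorem stmt_12 (R : Type*) [CommRing R] [Algebra (ZMod 2) R] (z : ℕ → R) (hz0 : z 0 = 1)
    (w : LaurentSeries R) (hw : (HahnSeries.ofPowerSeries ℤ R (additiveSeries z)) * w = 1) :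
    let c : ℕ → LaurentSeries R := fun n =>
      HahnSeries.single (-(2 ^ n : ℤ)) (1 : R) *
        (HahnSeries.ofPowerSeries ℤ R (tailSeries z (n + 1)) +
          w * HahnSeries.ofPowerSeries ℤ R (tailSqSeries z n))
    (∀ n : ℕ, 1 ≤ n →
        c n + c (n - 1) * HahnSeries.single (-(2 ^ (n - 1) : ℤ)) (1 : R) =
          HahnSeries.C (z n) + w * HahnSeries.C (z (n - 1) ^ 2)) ∧
      c 0 = 1 := by
  have h2R : (2 : R) = 0 := by
    have h : ((2 : ℕ) : R) = algebraMap (ZMod 2) R ((2 : ℕ) : ZMod 2) := (map_natCast _ 2).symm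
    rw [show ((2 : ℕ) : ZMod 2) = 0 by decide, map_zero] at h
    exact_mod_cast h
  have hx : ∀ x : LaurentSeries R, x + x = 0 := by
    intro x
    ext g
    rw [HahnSeries.coeff_add, ← two_mul, h2R, zero_mul]
    simp
  intro c
  constructor
  · intro n hn
    obtain ⟨k, rfl⟩ : ∃ k, n = k + 1 := ⟨n - 1, by omega⟩
    simp only [c, Nat.add_sub_cancel]
    rw [aux_tail_succ z (k + 1), aux_tailSq_succ z k, map_add, map_add, aux_ofPS_monomial,
      aux_ofPS_monomial]
    have hAA : ∀ x : LaurentSeries R,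
        HahnSeries.single (-(2 ^ k : ℤ)) (1 : R) * x * HahnSeries.single (-(2 ^ k : ℤ)) (1 : R) =
          HahnSeries.single (-(2 ^ (k + 1) : ℤ)) (1 : R) * x := by
      intro x
      rw [mul_right_comm, HahnSeries.single_mul_single, one_mul]
      congr 1
      ring_nf
    have h4 : ∀ a : R, HahnSeries.single (-(2 ^ (k + 1) : ℤ)) (1 : R) *
        HahnSeries.single (((2 ^ (k + 1) : ℕ) : ℤ)) a = HahnSeries.C a := by
      intro a
      rw [show (((2 ^ (k + 1) : ℕ)) : ℤ) = (2 ^ (k + 1) : ℤ) by push_cast; ring,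
        HahnSeries.single_mul_single, neg_add_cancel, one_mul]
      rfl
    have h3 := hAA (HahnSeries.ofPowerSeries ℤ R (tailSeries z (k + 1 + 1)) +
      HahnSeries.single (((2 ^ (k + 1) : ℕ)) : ℤ) (z (k + 1)) +
      w * (HahnSeries.ofPowerSeries ℤ R (tailSqSeries z (k + 1)) +
        HahnSeries.single (((2 ^ (k + 1) : ℕ)) : ℤ) (z k ^ 2)))
    have h6 := hx (HahnSeries.single (-(2 ^ (k + 1) : ℤ)) (1 : R) *
      (HahnSeries.ofPowerSeries ℤ R (tailSeries z (k + 1 + 1)) +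
        w * HahnSeries.ofPowerSeries ℤ R (tailSqSeries z (k + 1))))
    linear_combination h3 + h4 (z (k + 1)) + w * h4 (z k ^ 2) + h6
  · simp only [c]
    have hZ : HahnSeries.ofPowerSeries ℤ R (additiveSeries z) =
        HahnSeries.ofPowerSeries ℤ R (tailSeries z (0 + 1)) +
          HahnSeries.single (((2 ^ 0 : ℕ)) : ℤ) (z 0) := by
      rw [aux_additive_eq_tail z, aux_tail_succ z 0, map_add, aux_ofPS_monomial]
    have hS : HahnSeries.ofPowerSeries ℤ R (tailSqSeries z 0) =
        HahnSeries.ofPowerSeries ℤ R (additiveSeries z) ^ 2 := by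
      rw [← aux_sq h2R z, map_pow]
    have h7 : w * HahnSeries.ofPowerSeries ℤ R (additiveSeries z) ^ 2 =
        HahnSeries.ofPowerSeries ℤ R (additiveSeries z) := by
      calc w * HahnSeries.ofPowerSeries ℤ R (additiveSeries z) ^ 2
          = (HahnSeries.ofPowerSeries ℤ R (additiveSeries z) * w) *
            HahnSeries.ofPowerSeries ℤ R (additiveSeries z) := by ring
        _ = _ := by rw [hw, one_mul]
    have h8 : HahnSeries.single (-(2 ^ 0 : ℤ)) (1 : R) *
        HahnSeries.single (((2 ^ 0 : ℕ)) : ℤ) (z 0) = 1 := by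
      rw [show (((2 ^ 0 : ℕ)) : ℤ) = (2 ^ 0 : ℤ) by norm_num,
        HahnSeries.single_mul_single, neg_add_cancel, one_mul, hz0]
      exact HahnSeries.single_zero_one
    rw [hS]
    linear_combination (HahnSeries.single (-(2 ^ 0 : ℤ)) (1 : R)) * h7 +
      (HahnSeries.single (-(2 ^ 0 : ℤ)) (1 : R)) * hZ + h8 +
      hx ((HahnSeries.single (-(2 ^ 0 : ℤ)) (1 : R)) *
        HahnSeries.ofPowerSeries ℤ R (tailSeries z (0 + 1)))
end

section
/- With notation as above (R a commutative F₂-algebra, ζ₀ = 1, ζ(t) = Σ ζ_i t^(2^i) invertible in R((t)), and t^(2^n) c_n(t) = Σ_{i≥n+1} ζ_i t^(2^i) + ζ(t)⁻¹ Σ_{i≥n} ζ_i² t^(2^{i+1})): the constant coefficient of ζ(t)⁻¹ is ζ₁, and for every i ≥ 0 the coefficient of t^(2^{i+1}) in t^(2^i) · c_i(t) equals ζ_{i+1} + ζ₁ · ζ_i². -/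
open PowerSeries

/-- With `ζ₀ = 1`, `ζ(t) = Σ ζ_i t^(2^i)` invertible in `R((t))` with inverse `w`, and
`t^(2^i) c_i = Σ_{j≥i+1} ζ_j t^(2^j) + ζ(t)⁻¹ Σ_{j≥i} ζ_j² t^(2^(j+1))`: the constant
coefficient of `ζ(t)⁻¹` is `ζ₁`, and the coefficient of `t^(2^(i+1))` in `t^(2^i) c_i`
is `ζ_{i+1} + ζ₁ ζ_i²` (Steinberger's formula `Q^(2^i) ζ_i = ζ_{i+1} + ζ_i² ζ₁`). -/
theorem stmt_13 (R : Type*) [CommRing R] [Algebra (ZMod 2) R] (z : ℕ → R) (hz0 : z 0 = 1)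
    (w : LaurentSeries R) (hw : (HahnSeries.ofPowerSeries ℤ R (additiveSeries z)) * w = 1) :
    w.coeff 0 = z 1 ∧
      ∀ i : ℕ,
        (HahnSeries.ofPowerSeries ℤ R (tailSeries z (i + 1)) +
            w * HahnSeries.ofPowerSeries ℤ R (tailSqSeries z i)).coeff ((2 : ℤ) ^ (i + 1)) =
          z (i + 1) + z 1 * z i ^ 2 := by
  classical
  -- characteristic 2
  have h2 : (2 : R) = 0 := by
    have h := map_ofNat (algebraMap (ZMod 2) R) 2
    have h0 : (2 : ZMod 2) = 0 := by decide
    rw [h0] at h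
    simpa using h.symm
  have hneg : ∀ x : R, -x = x := fun x =>
    neg_eq_of_add_eq_zero_left (by rw [← two_mul, h2, zero_mul])
  -- write ζ = X * u
  set u : PowerSeries R := PowerSeries.mk
    (fun n => if n + 1 = 2 ^ Nat.log 2 (n + 1) then z (Nat.log 2 (n + 1)) else 0) with hu_def
  have hXu : additiveSeries z = X * u := by
    ext n
    cases n with
    | zero => simp [additiveSeries]
    | succ n =>
      rw [coeff_succ_X_mul]
      simp [additiveSeries, hu_def]
  have hu0 : constantCoeff (R := R) u = 1 := by
    rw [← coeff_zero_eq_constantCoeff]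
    simp [hu_def, hz0]
  set v : PowerSeries R := u.invOfUnit 1 with hv_def
  have huv : u * v = 1 := PowerSeries.mul_invOfUnit u 1 (by rw [hu0]; rfl)
  have hv0 : (coeff (R := R) 0) v = 1 := by
    have := congrArg (constantCoeff (R := R)) huv
    rw [map_mul, hu0, one_mul, map_one] at this
    rw [coeff_zero_eq_constantCoeff, this]
  have hl2 : Nat.log 2 2 = 1 := by simpa using Nat.log_pow (b := 2) one_lt_two 1
  have hu1 : (coeff (R := R) 1) u = z 1 := by
    simp [hu_def, hl2]
  have hv1 : (coeff (R := R) 1) v = z 1 := by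
    have h := congrArg (coeff (R := R) 1) huv
    rw [coeff_mul,
      show (Finset.HasAntidiagonal.antidiagonal 1 : Finset (ℕ × ℕ)) = {(0, 1), (1, 0)} by decide] at h
    rw [Finset.sum_insert (by decide), Finset.sum_singleton] at h
    simp only [coeff_zero_eq_constantCoeff, hu0, one_mul, coeff_one, if_neg one_ne_zero] at h
    have hv0' : constantCoeff (R := R) v = 1 := by rw [← coeff_zero_eq_constantCoeff]; exact hv0
    rw [hu1, hv0', mul_one] at h
    have : (coeff (R := R) 1) v = -(z 1) := by linear_combination h
    rw [this, hneg]
  -- the explicit inverse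
  set w' : LaurentSeries R := HahnSeries.single (-1 : ℤ) 1 * HahnSeries.ofPowerSeries ℤ R v
    with hw'_def
  have hZw' : (HahnSeries.ofPowerSeries ℤ R (additiveSeries z)) * w' = 1 := by
    rw [hXu, map_mul, HahnSeries.ofPowerSeries_X, hw'_def]
    have : (HahnSeries.single (1 : ℤ) (1 : R)) * HahnSeries.ofPowerSeries ℤ R u *
        (HahnSeries.single (-1 : ℤ) 1 * HahnSeries.ofPowerSeries ℤ R v) =
        (HahnSeries.single (1 : ℤ) (1 : R) * HahnSeries.single (-1 : ℤ) 1) *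
        (HahnSeries.ofPowerSeries ℤ R u * HahnSeries.ofPowerSeries ℤ R v) := by ring
    rw [this, HahnSeries.single_mul_single, ← map_mul, huv]
    norm_num
  have hww' : w = w' := by
    calc w = 1 * w := (one_mul w).symm
    _ = (HahnSeries.ofPowerSeries ℤ R (additiveSeries z) * w') * w := by rw [hZw']
    _ = w' * (HahnSeries.ofPowerSeries ℤ R (additiveSeries z) * w) := by ring
    _ = w' := by rw [hw, mul_one]
  have hwc : ∀ n : ℕ, w.coeff ((n : ℤ) - 1) = (coeff (R := R) n) v := by
    intro n
    rw [hww', hw'_def]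
    have h1 : ((n : ℤ) - 1) = (n : ℤ) + (-1) := by ring
    rw [h1, HahnSeries.coeff_single_mul_add, one_mul, HahnSeries.ofPowerSeries_apply_coeff]
  constructor
  · have := hwc 1
    simpa [hv1] using this
  · intro i
    rw [HahnSeries.coeff_add]
    -- first summand
    have hcast : ((2 : ℤ) ^ (i + 1)) = ((2 ^ (i + 1) : ℕ) : ℤ) := by push_cast; ring
    have h1 : (HahnSeries.ofPowerSeries ℤ R (tailSeries z (i + 1))).coeff ((2 : ℤ) ^ (i + 1)) =
        z (i + 1) := by
      rw [hcast, HahnSeries.ofPowerSeries_apply_coeff]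
      simp [tailSeries, Nat.log_pow]
    -- second summand
    have h2' : (w * HahnSeries.ofPowerSeries ℤ R (tailSqSeries z i)).coeff ((2 : ℤ) ^ (i + 1)) =
        z 1 * z i ^ 2 := by
      rw [hww', hw'_def, mul_assoc, ← map_mul]
      have h3 : ((2 : ℤ) ^ (i + 1)) = ((2 ^ (i + 1) + 1 : ℕ) : ℤ) + (-1) := by push_cast; ring
      rw [h3, HahnSeries.coeff_single_mul_add, one_mul, HahnSeries.ofPowerSeries_apply_coeff]
      rw [coeff_mul]
      rw [Finset.sum_eq_single_of_mem (1, 2 ^ (i + 1))]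
      · have hc1 : (coeff (R := R) (2 ^ (i + 1))) (tailSqSeries z i) = z i ^ 2 := by
          simp [tailSqSeries, Nat.log_pow]
        rw [hc1, hv1]
      · rw [Finset.HasAntidiagonal.mem_antidiagonal]; omega
      · rintro ⟨a, b⟩ hp hne
        rw [Finset.HasAntidiagonal.mem_antidiagonal] at hp
        simp only at hp ⊢
        by_cases hS : b = 2 ^ Nat.log 2 b ∧ i + 1 ≤ Nat.log 2 b
        · exfalso
          have hb1 : 2 ^ (i + 1) ≤ b := by
            rw [hS.1]
            exact Nat.pow_le_pow_right (by norm_num) hS.2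
          have hki : Nat.log 2 b = i + 1 := by
            by_contra hk'
            have hk2 : i + 2 ≤ Nat.log 2 b := by omega
            have hb2 : 2 ^ (i + 2) ≤ b := by
              rw [hS.1]
              exact Nat.pow_le_pow_right (by norm_num) hk2
            have h3' : 2 ^ (i + 1) + 2 ^ (i + 1) = 2 ^ (i + 2) := by ring
            have h4 : 1 ≤ 2 ^ (i + 1) := Nat.one_le_two_pow
            omega
          have hb : b = 2 ^ (i + 1) := by rw [hS.1, hki]
          exact hne (by simp only [Prod.mk.injEq]; omega)
        · have hc0 : (coeff (R := R) b) (tailSqSeries z i) = 0 := by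
            simp only [tailSqSeries, coeff_mk, if_neg hS]
          rw [hc0, mul_zero]
    rw [h1, h2']
end
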